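/- Fix p ≥ 1 and 0 < δ ≤ 1. Then (1/(2p(n-p))) · log(c_{n,p,2} δ^{2p(n-p)}) → log(δ/√p) as n → ∞, where c_{n,p,2} = (1/(np-p²)!) ∏_{i=1}^{p} (n-i)!/(p-i)!. Equivalently, c_{n,p,2} δ^{2p(n-p)} = (δ/√p)^{2p(n-p) + o(n)}. -/

import Mathlib

/-!
Put `m = n - p`. Then `log c_{n,p,2} = ∑_{i=1}^p log (m + p - i)! - log (p m)! + O(1)`.
Each `log (m + k)!` exceeds `log m!` by at most `k log (m + k) = o(m)`, and Stirling's formula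
`log N! = N log N - N + o(N)` gives `log (p m)! = p log m! + p m log p + o(m)`. Hence
`log c_{n,p,2} = -p m log p + o(m)`, and dividing `log (c_{n,p,2} δ^{2pm})` by `2pm` leaves
`log δ - (log p) / 2 + o(1)`.
-/

open Finset Filter Real

open Asymptotics
open scoped Nat

lemma isLittleO_log_natCast_add (k : ℝ) :
    (fun m : ℕ => log (m + k)) =o[atTop] (fun m : ℕ => (m : ℝ)) := by
  have hlog : (fun m : ℕ => log (m + k)) =o[atTop] (fun m : ℕ => (m : ℝ) + k) :=
    isLittleO_log_id_atTop.comp_tendsto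
      (tendsto_atTop_add_const_right _ k tendsto_natCast_atTop_atTop)
  have hconst : (fun _ : ℕ => k) =O[atTop] (fun m : ℕ => (m : ℝ)) :=
    ((isLittleO_const_id_atTop k).comp_tendsto tendsto_natCast_atTop_atTop).isBigO
  exact hlog.trans_isBigO ((isBigO_refl _ _).add hconst)

namespace Stirling

lemma log_factorial_sub_eq {n : ℕ} (hn : n ≠ 0) :
    log n ! - (n * log n - n) = log (stirlingSeq n) + 2⁻¹ * log (2 * n) := by
  rw [log_stirlingSeq_formula, log_div (by positivity) (exp_ne_zero 1), log_exp]
  ring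

theorem isLittleO_log_factorial :
    (fun n : ℕ => log n ! - (n * log n - n)) =o[atTop] (fun n : ℕ => (n : ℝ)) := by
  have hseq : (fun n : ℕ => log (stirlingSeq n)) =o[atTop] (fun n : ℕ => (n : ℝ)) :=
    ((continuousAt_log (by positivity)).tendsto.comp tendsto_stirlingSeq_sqrt_pi).isBigO_one ℝ
      |>.trans_isLittleO <| (isLittleO_one_left_iff ℝ).2 <|
        tendsto_norm_atTop_atTop.comp tendsto_natCast_atTop_atTop
  have hlog : (fun n : ℕ => 2⁻¹ * log (2 * n)) =o[atTop] (fun n : ℕ => (n : ℝ)) := by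
    have h : (fun n : ℕ => log (2 * n)) =o[atTop] (fun n : ℕ => 2 * (n : ℝ)) :=
      isLittleO_log_id_atTop.comp_tendsto (tendsto_natCast_atTop_atTop.const_mul_atTop two_pos)
    exact (h.trans_isBigO ((isBigO_refl _ _).const_mul_left 2)).const_mul_left 2⁻¹
  refine (hseq.add hlog).congr' ?_ EventuallyEq.rfl
  filter_upwards [eventually_ne_atTop 0] with n hn
  exact (log_factorial_sub_eq hn).symm

end Stirling

lemma isLittleO_log_factorial_mul_sub {c : ℕ} (hc : 0 < c) :
    (fun m : ℕ => log (c * m)! - c * log m ! - c * m * log c) =o[atTop]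
      (fun m : ℕ => (m : ℝ)) := by
  have hmul : (fun m : ℕ => log (c * m)! - ((c * m : ℕ) * log (c * m : ℕ) - (c * m : ℕ)))
      =o[atTop] (fun m : ℕ => (m : ℝ)) := by
    refine (Stirling.isLittleO_log_factorial.comp_tendsto
      (tendsto_id.const_mul_atTop' hc)).trans_isBigO ?_
    simpa [Function.comp_def] using
      (isBigO_refl (fun m : ℕ => (m : ℝ)) atTop).const_mul_left (c : ℝ)
  refine (hmul.sub (Stirling.isLittleO_log_factorial.const_mul_left (c : ℝ))).congr' ?_
    EventuallyEq.rfl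
  filter_upwards [eventually_ne_atTop 0] with m hm
  push_cast
  rw [log_mul (by positivity) (by positivity)]
  ring

lemma isLittleO_log_factorial_add_sub (k : ℕ) :
    (fun m : ℕ => log (m + k)! - log m !) =o[atTop] (fun m : ℕ => (m : ℝ)) := by
  refine IsBigO.trans_isLittleO (IsBigO.of_bound 1 (Eventually.of_forall fun m => ?_))
    ((isLittleO_log_natCast_add k).const_mul_left (k : ℝ))
  have hasc : log (m + k)! - log m ! = log ((m + 1).ascFactorial k) := by
    rw [← Nat.factorial_mul_ascFactorial, Nat.cast_mul, log_mul (by positivity) (by positivity)]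
    ring
  have hle : ((m + 1).ascFactorial k : ℝ) ≤ ((m : ℝ) + k) ^ k := by
    exact_mod_cast Nat.ascFactorial_le_pow_add m k
  rw [hasc, one_mul, norm_of_nonneg (log_natCast_nonneg _), ← log_pow]
  exact (log_le_log (by positivity) hle).trans (le_abs_self _)

/-- The constant `c_{n,p,2}` of `μ(B(δ)) = c_{n,p,2} δ^{2p(n-p)}` in `G_{n,p}(ℂ)`. -/
noncomputable def grassmannBallConst (n p : ℕ) : ℝ :=
  (1 / ((n * p - p ^ 2)! : ℝ)) * ∏ i ∈ Icc 1 p, (((n - i)! : ℝ) / ((p - i)! : ℝ))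

lemma log_grassmannBallConst_add (m p : ℕ) :
    log (grassmannBallConst (m + p) p) =
      ∑ i ∈ Icc 1 p, log (m + (p - i))! - log (p * m)! - ∑ i ∈ Icc 1 p, log (p - i)! := by
  have hnp : (m + p) * p - p ^ 2 = p * m := by rw [sq, add_mul, Nat.add_sub_cancel, mul_comm]
  have hsub : ∀ i ∈ Icc 1 p, m + p - i = m + (p - i) := fun i hi => by
    simp only [mem_Icc] at hi; omega
  rw [grassmannBallConst, hnp, log_mul (by positivity) (by positivity), one_div, log_inv,
    log_prod (fun i _ => by positivity), sub_right_comm, ← sum_sub_distrib]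
  rw [sum_congr rfl fun i hi => by rw [log_div (by positivity) (by positivity), hsub i hi]]
  ring

lemma isLittleO_log_grassmannBallConst_add {p : ℕ} (hp : 0 < p) :
    (fun m : ℕ => log (grassmannBallConst (m + p) p) + p * m * log p) =o[atTop]
      (fun m : ℕ => (m : ℝ)) := by
  have hsum := IsLittleO.sum (s := Icc 1 p) fun i _ => isLittleO_log_factorial_add_sub (p - i)
  have hconst : (fun _ : ℕ => ∑ i ∈ Icc 1 p, log (p - i)!) =o[atTop] (fun m : ℕ => (m : ℝ)) :=
    (isLittleO_const_id_atTop _).comp_tendsto tendsto_natCast_atTop_atTop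
  refine ((hsum.sub (isLittleO_log_factorial_mul_sub hp)).sub hconst).congr' ?_ EventuallyEq.rfl
  refine Eventually.of_forall fun m => ?_
  simp only [Finset.sum_apply, log_grassmannBallConst_add, sum_sub_distrib, sum_const,
    Nat.card_Icc, Nat.add_sub_cancel, nsmul_eq_mul]
  ring

theorem stmt5_general (p : ℕ) (hp : 1 ≤ p) (δ : ℝ) (hδ0 : 0 < δ) :
    Tendsto (fun n : ℕ =>
        (1 / (2 * (p : ℝ) * ((n : ℝ) - p))) *
          Real.log ((1 / (Nat.factorial (n * p - p ^ 2) : ℝ)) *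
            (∏ i ∈ Finset.Icc 1 p,
              ((Nat.factorial (n - i) : ℝ) / (Nat.factorial (p - i) : ℝ))) *
            δ ^ (2 * p * (n - p))))
      atTop (nhds (Real.log (δ / Real.sqrt p))) := by
  have hp0 : (0 : ℝ) < p := by exact_mod_cast hp
  have hR := (isLittleO_log_grassmannBallConst_add hp).tendsto_div_nhds_zero.div_const (2 * p)
  have hlim : log (δ / √p) = log δ - log p / 2 + 0 / (2 * p) := by
    rw [log_div hδ0.ne' (by positivity), log_sqrt hp0.le]
    ring
  rw [← tendsto_add_atTop_iff_nat p, hlim]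
  refine (tendsto_const_nhds.add hR).congr' ?_
  filter_upwards [eventually_ne_atTop 0] with m hm
  change _ = 1 / (2 * p * (((m + p : ℕ) : ℝ) - p)) *
    log (grassmannBallConst (m + p) p * δ ^ (2 * p * (m + p - p)))
  have hC : grassmannBallConst (m + p) p ≠ 0 := by unfold grassmannBallConst; positivity
  rw [Nat.add_sub_cancel, Nat.cast_add, add_sub_cancel_right,
    log_mul hC (pow_ne_zero _ hδ0.ne'), log_pow]
  field_simp
  push_cast
  ring

/-- Fix `p ≥ 1` and `0 < δ ≤ 1`. With
`c_{n,p,2} = (1/(np-p²)!) ∏_{i=1}^{p} (n-i)!/(p-i)!`, we have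
`(1/(2p(n-p))) · log(c_{n,p,2} δ^{2p(n-p)}) → log(δ/√p)` as `n → ∞`;
equivalently `c_{n,p,2} δ^{2p(n-p)} = (δ/√p)^{2p(n-p)+o(n)}`. -/
theorem stmt5 (p : ℕ) (hp : 1 ≤ p) (δ : ℝ) (hδ0 : 0 < δ) (hδ1 : δ ≤ 1) :
    Tendsto (fun n : ℕ =>
        (1 / (2 * (p : ℝ) * ((n : ℝ) - p))) *
          Real.log ((1 / (Nat.factorial (n * p - p ^ 2) : ℝ)) *
            (∏ i ∈ Finset.Icc 1 p,
              ((Nat.factorial (n - i) : ℝ) / (Nat.factorial (p - i) : ℝ))) *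
            δ ^ (2 * p * (n - p))))
      atTop (nhds (Real.log (δ / Real.sqrt p))) :=
  stmt5_general p hp δ hδ0
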